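/- arXiv:2303.16279 — 3 statements merged into one kernel-verified Lean document; each statement's English description precedes it below -/
import Mathlib

section
/- Let f : ℝ^d → ℝ be convex and differentiable and satisfy the block-Lipschitz assumption with resulting constant L. Then for all x, y ∈ ℝ^d: f(y) − f(x) ≤ ⟨∇f(x), y − x⟩ + (L/2)‖y − x‖². -/
/-!
Telescope `f y - f x` through the points `x + maskGE blk (j + 1) (y - x)`, which switch the
coordinates from `y` to `x` one block at a time. Along the `j`-th step only block `j` moves, and
the moving point differs from `x` only in blocks `≥ j`; so the block-Lipschitz bound controls the
`j`-th partial derivative by `‖v_j‖ √((1 - t) b_j + t a_j)`, where `a_j`, `b_j` are the `Q^j`-forms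
of the tails of `y - x` from block `j` and from block `j + 1` on. Concavity of `√` bounds the
increment by `‖v_j‖ √((a_j + b_j) / 2)`, and Cauchy–Schwarz across blocks turns the sum into
`‖y - x‖ √((y - x)ᵀ Q̃ (y - x) / 2) ≤ (L / 2) ‖y - x‖²`.
-/

noncomputable section
open MeasureTheory Finset Set RealInnerProductSpace

abbrev Euc (d : ℕ) := EuclideanSpace ℝ (Fin d)

def blockMask {d m : ℕ} (blk : Fin d → Fin m) (j : Fin m) (z : Euc d) : Euc d :=
  (EuclideanSpace.equiv (Fin d) ℝ).symm fun i => if blk i = j then z i else 0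

def blockCombine {d m : ℕ} (blk : Fin d → Fin m) (j : ℕ) (x y : Euc d) : Euc d :=
  (EuclideanSpace.equiv (Fin d) ℝ).symm fun i => if (blk i : ℕ) + 1 ≤ j then x i else y i

def quadForm {d : ℕ} (Q : Matrix (Fin d) (Fin d) ℝ) (z : Euc d) : ℝ :=
  ∑ i, ∑ i', Q i i' * z i * z i'

def keepGE {d m : ℕ} (blk : Fin d → Fin m) (j : ℕ) (Q : Matrix (Fin d) (Fin d) ℝ) :
    Matrix (Fin d) (Fin d) ℝ :=
  Matrix.of fun i i' => if j ≤ (blk i : ℕ) + 1 ∧ j ≤ (blk i' : ℕ) + 1 then Q i i' else 0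

def Qtilde {d m : ℕ} (blk : Fin d → Fin m) (Q : Fin m → Matrix (Fin d) (Fin d) ℝ) :
    Matrix (Fin d) (Fin d) ℝ :=
  ∑ j : Fin m, (keepGE blk ((j : ℕ) + 1) (Q j) + keepGE blk ((j : ℕ) + 2) (Q j))

def specNorm {d : ℕ} (Q : Matrix (Fin d) (Fin d) ℝ) : ℝ :=
  ‖Matrix.toEuclideanCLM (𝕜 := ℝ) Q‖

def bigL {d m : ℕ} (blk : Fin d → Fin m) (Q : Fin m → Matrix (Fin d) (Fin d) ℝ) : ℝ :=
  Real.sqrt (2 * specNorm (Qtilde blk Q))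

def BlockLip {d m : ℕ} (blk : Fin d → Fin m) (f : Euc d → ℝ)
    (Q : Fin m → Matrix (Fin d) (Fin d) ℝ) : Prop :=
  ∀ (j : Fin m) (x y : Euc d),
    ‖blockMask blk j (gradient f x) - blockMask blk j (gradient f y)‖ ^ 2 ≤
      quadForm (Q j) (x - y)

def SubgradStrongConvex {d : ℕ} (γ : ℝ) (g : Euc d → ℝ) : Prop :=
  ∀ x y s : Euc d, (∀ z, g x + ⟪s, z - x⟫ ≤ g z) →
    g x + ⟪s, y - x⟫ + γ / 2 * ‖y - x‖ ^ 2 ≤ g y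

section Blocks

variable {d m : ℕ} (blk : Fin d → Fin m)

-- As in `keepGE`, `j` is a 1-based block index: `maskGE blk (k + 1) z` keeps the blocks `≥ k`.
def maskGE (j : ℕ) (z : Euc d) : Euc d :=
  (EuclideanSpace.equiv (Fin d) ℝ).symm fun i => if j ≤ (blk i : ℕ) + 1 then z i else 0

@[simp] lemma blockMask_apply (j : Fin m) (z : Euc d) (i : Fin d) :
    blockMask blk j z i = if blk i = j then z i else 0 := rfl

@[simp] lemma maskGE_apply (j : ℕ) (z : Euc d) (i : Fin d) :
    maskGE blk j z i = if j ≤ (blk i : ℕ) + 1 then z i else 0 := rfl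

lemma maskGE_one (z : Euc d) : maskGE blk 1 z = z := by
  ext i
  simp

lemma maskGE_of_le {j : ℕ} (hj : m + 1 ≤ j) (z : Euc d) : maskGE blk j z = 0 := by
  ext i
  have := (blk i).isLt
  simp only [maskGE_apply, PiLp.zero_apply, ite_eq_right_iff]
  omega

lemma maskGE_add_blockMask (j : Fin m) (z : Euc d) :
    maskGE blk (j + 2) z + blockMask blk j z = maskGE blk (j + 1) z := by
  ext i
  simp only [PiLp.add_apply, maskGE_apply, blockMask_apply, ← Fin.val_inj]
  split_ifs <;> first | omega | simp

lemma blockMask_sub (j : Fin m) (a b : Euc d) :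
    blockMask blk j (a - b) = blockMask blk j a - blockMask blk j b := by
  ext i
  simp only [PiLp.sub_apply, blockMask_apply]
  split_ifs <;> simp

lemma inner_blockMask_right (j : Fin m) (a w : Euc d) :
    ⟪a, blockMask blk j w⟫ = ⟪blockMask blk j a, blockMask blk j w⟫ := by
  simp only [PiLp.inner_apply, RCLike.inner_apply, conj_trivial, blockMask_apply]
  refine sum_congr rfl fun i _ => ?_
  split_ifs <;> simp

lemma sum_inner_blockMask (a w : Euc d) : ∑ j, ⟪a, blockMask blk j w⟫ = ⟪a, w⟫ := by
  simp only [PiLp.inner_apply, RCLike.inner_apply, conj_trivial, blockMask_apply]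
  rw [sum_comm]
  refine sum_congr rfl fun i _ => ?_
  simp

lemma sum_norm_sq_blockMask (w : Euc d) : ∑ j, ‖blockMask blk j w‖ ^ 2 = ‖w‖ ^ 2 := by
  simp only [EuclideanSpace.norm_sq_eq, blockMask_apply]
  rw [sum_comm]
  refine sum_congr rfl fun i _ => ?_
  simp [apply_ite]

lemma sum_norm_blockMask_mul_sqrt_le (w : Euc d) {c : Fin m → ℝ} (hc : ∀ j, 0 ≤ c j) :
    ∑ j, ‖blockMask blk j w‖ * √(c j) ≤ ‖w‖ * √(∑ j, c j) := by
  have := Real.sum_mul_le_sqrt_mul_sqrt univ (fun j => ‖blockMask blk j w‖) fun j => √(c j)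
  simpa only [sum_norm_sq_blockMask, Real.sqrt_sq (norm_nonneg w), Real.sq_sqrt (hc _)] using this

end Blocks

section QuadForm

variable {d : ℕ}

lemma quadForm_add (A B : Matrix (Fin d) (Fin d) ℝ) (z : Euc d) :
    quadForm (A + B) z = quadForm A z + quadForm B z := by
  simp only [quadForm, Matrix.add_apply, add_mul, sum_add_distrib]

lemma quadForm_sum {ι : Type*} (s : Finset ι) (A : ι → Matrix (Fin d) (Fin d) ℝ) (z : Euc d) :
    quadForm (∑ j ∈ s, A j) z = ∑ j ∈ s, quadForm (A j) z := by
  induction s using Finset.cons_induction with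
  | empty => simp [quadForm]
  | cons j s hj ih => rw [sum_cons, sum_cons, quadForm_add, ih]

lemma quadForm_le_specNorm (Q : Matrix (Fin d) (Fin d) ℝ) (z : Euc d) :
    quadForm Q z ≤ specNorm Q * ‖z‖ ^ 2 := by
  have hinner : quadForm Q z = ⟪z, Matrix.toEuclideanCLM (𝕜 := ℝ) Q z⟫ := by
    rw [Matrix.inner_toEuclideanCLM]
    simp only [quadForm, dotProduct, Matrix.mulVec, mul_sum]
    exact sum_congr rfl fun i _ => sum_congr rfl fun i' _ => by ring
  calc quadForm Q z ≤ ‖z‖ * ‖Matrix.toEuclideanCLM (𝕜 := ℝ) Q z‖ :=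
        hinner ▸ real_inner_le_norm _ _
    _ ≤ ‖z‖ * (specNorm Q * ‖z‖) := by gcongr; exact ContinuousLinearMap.le_opNorm _ _
    _ = specNorm Q * ‖z‖ ^ 2 := by ring

lemma norm_mul_sqrt_half_quadForm_le (Q : Matrix (Fin d) (Fin d) ℝ) (z : Euc d) :
    ‖z‖ * √(quadForm Q z / 2) ≤ √(2 * specNorm Q) / 2 * ‖z‖ ^ 2 := by
  have hQ : 0 ≤ specNorm Q := norm_nonneg _
  have hsqrt : √(quadForm Q z / 2) ≤ √(2 * specNorm Q) / 2 * ‖z‖ := by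
    rw [Real.sqrt_le_iff]
    refine ⟨by positivity, ?_⟩
    rw [mul_pow, div_pow, Real.sq_sqrt (by positivity)]
    linarith [quadForm_le_specNorm Q z]
  calc ‖z‖ * √(quadForm Q z / 2) ≤ ‖z‖ * (√(2 * specNorm Q) / 2 * ‖z‖) := by gcongr
    _ = √(2 * specNorm Q) / 2 * ‖z‖ ^ 2 := by ring

lemma convexOn_quadForm {Q : Matrix (Fin d) (Fin d) ℝ} (hQ : ∀ z, 0 ≤ quadForm Q z) :
    ConvexOn ℝ Set.univ (quadForm Q) := by
  refine ⟨convex_univ, fun u _ w _ a b ha hb hab => ?_⟩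
  have hsplit : quadForm Q (a • u + b • w) =
      a * quadForm Q u + b * quadForm Q w - a * b * quadForm Q (u - w) := by
    obtain rfl : b = 1 - a := by linarith
    simp only [quadForm, mul_sum, ← sum_sub_distrib, ← sum_add_distrib,
      PiLp.add_apply, PiLp.smul_apply, PiLp.sub_apply, smul_eq_mul]
    exact sum_congr rfl fun i _ => sum_congr rfl fun i' _ => by ring
  rw [hsplit, smul_eq_mul, smul_eq_mul]
  nlinarith [mul_nonneg (mul_nonneg ha hb) (hQ (u - w))]

variable {m : ℕ} (blk : Fin d → Fin m)

lemma quadForm_maskGE (j : ℕ) (Q : Matrix (Fin d) (Fin d) ℝ) (z : Euc d) :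
    quadForm Q (maskGE blk j z) = quadForm (keepGE blk j Q) z := by
  refine sum_congr rfl fun i _ => sum_congr rfl fun i' _ => ?_
  simp only [maskGE_apply, keepGE, Matrix.of_apply]
  split_ifs <;> simp_all

lemma quadForm_Qtilde (Q : Fin m → Matrix (Fin d) (Fin d) ℝ) (z : Euc d) :
    quadForm (Qtilde blk Q) z =
      ∑ j : Fin m,
        (quadForm (Q j) (maskGE blk (j + 1) z) + quadForm (Q j) (maskGE blk (j + 2) z)) := by
  simp only [Qtilde, quadForm_sum, quadForm_add, quadForm_maskGE]

end QuadForm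

lemma sqrt_le_add_sq_div {u s : ℝ} (hu : 0 ≤ u) (hs : 0 < s) : √u ≤ (u + s ^ 2) / (2 * s) := by
  rw [le_div_iff₀ (by positivity)]
  nlinarith [Real.sq_sqrt hu, sq_nonneg (√u - s)]

lemma sub_le_mul_sqrt_of_hasDerivAt_le {φ φ' : ℝ → ℝ} {a b K : ℝ} (ha : 0 ≤ a) (hb : 0 ≤ b)
    (hK : 0 ≤ K) (hφ : ∀ t, HasDerivAt φ (φ' t) t)
    (hφ' : ∀ t ∈ Icc (0 : ℝ) 1, φ' t ≤ K * √((1 - t) * b + t * a)) :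
    φ 1 - φ 0 ≤ K * √((a + b) / 2) := by
  set s := √((a + b) / 2)
  have hs2 : s ^ 2 = (a + b) / 2 := Real.sq_sqrt (by positivity)
  -- `B` integrates the tangent line of `√` at `s ^ 2 = (a + b) / 2`, the mean of
  -- `(1 - t) * b + t * a` over `[0, 1]`; hence `B 1 = φ 0 + K * s`.
  set B : ℝ → ℝ := fun t => φ 0 + K / (2 * s) * (t * (b + s ^ 2) + t ^ 2 * ((a - b) / 2))
  have hB : ∀ t, HasDerivAt B (K / (2 * s) * ((1 - t) * b + t * a + s ^ 2)) t := fun t =>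
    ((((hasDerivAt_id' t).mul_const (b + s ^ 2)).add ((hasDerivAt_pow 2 t).mul_const
      ((a - b) / 2))).const_mul (K / (2 * s))).const_add (φ 0) |>.congr_deriv (by ring)
  have hbound : ∀ t ∈ Ico (0 : ℝ) 1, φ' t ≤ K / (2 * s) * ((1 - t) * b + t * a + s ^ 2) := by
    intro t ht
    have hu : 0 ≤ (1 - t) * b + t * a := by nlinarith [ht.1, ht.2]
    refine (hφ' t (Ico_subset_Icc_self ht)).trans ?_
    rcases (Real.sqrt_nonneg _ : 0 ≤ s).eq_or_lt with hs | hs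
    · have hab : a = 0 ∧ b = 0 := by constructor <;> nlinarith [hs2, hs]
      have hs0 : s = 0 := hs.symm
      simp [hab, hs0]
    · rw [div_mul_comm, mul_comm]
      exact mul_le_mul_of_nonneg_right (sqrt_le_add_sq_div hu hs) hK
  have hfence := image_le_of_deriv_right_le_deriv_boundary
    (fun t _ => (hφ t).continuousAt.continuousWithinAt) (fun t _ => (hφ t).hasDerivWithinAt)
    (by simp [B]) (fun t _ => (hB t).continuousAt.continuousWithinAt)
    (fun t _ => (hB t).hasDerivWithinAt) hbound (right_mem_Icc.2 zero_le_one)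
  have hB1 : B 1 = φ 0 + K * s := by
    have hnum : 1 * (b + s ^ 2) + 1 ^ 2 * ((a - b) / 2) = s * (2 * s) := by
      linear_combination (-1 : ℝ) * hs2
    simp only [B, hnum]
    rcases eq_or_ne s 0 with hs | hs
    · simp [hs]
    · field_simp
  linarith

section BlockLip

variable {d m : ℕ} {blk : Fin d → Fin m} {f : Euc d → ℝ} {Q : Fin m → Matrix (Fin d) (Fin d) ℝ}

lemma BlockLip.quadForm_nonneg (hlip : BlockLip blk f Q) (j : Fin m) (z : Euc d) :
    0 ≤ quadForm (Q j) z :=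
  (sq_nonneg _).trans (by simpa using hlip j z 0)

lemma BlockLip.inner_sub_blockMask_le (hlip : BlockLip blk f Q) (j : Fin m) (p q w : Euc d) :
    ⟪gradient f p - gradient f q, blockMask blk j w⟫ ≤
      ‖blockMask blk j w‖ * √(quadForm (Q j) (p - q)) := by
  rw [inner_blockMask_right, blockMask_sub, mul_comm]
  refine (real_inner_le_norm _ _).trans (mul_le_mul_of_nonneg_right ?_ (norm_nonneg _))
  exact Real.le_sqrt_of_sq_le (hlip j p q)

lemma BlockLip.sub_le_inner_blockMask_add (hdiff : Differentiable ℝ f) (hlip : BlockLip blk f Q)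
    (j : Fin m) (x h : Euc d) :
    f (x + maskGE blk (j + 1) h) - f (x + maskGE blk (j + 2) h) ≤
      ⟪gradient f x, blockMask blk j h⟫ + ‖blockMask blk j h‖ *
        √((quadForm (Q j) (maskGE blk (j + 1) h) + quadForm (Q j) (maskGE blk (j + 2) h)) / 2) := by
  set u := maskGE blk (j + 2) h
  set w := maskGE blk (j + 1) h
  set v := blockMask blk j h
  have hw : w = u + v := (maskGE_add_blockMask blk j h).symm
  set φ : ℝ → ℝ := fun t => f (x + u + t • v) - t * ⟪gradient f x, v⟫
  have hφ : ∀ t, HasDerivAt φ (⟪gradient f (x + u + t • v), v⟫ - ⟪gradient f x, v⟫) t := by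
    intro t
    have hline : HasDerivAt (fun t : ℝ => x + u + t • v) v t := by
      simpa using ((hasDerivAt_id t).smul_const v).const_add (x + u)
    have hcomp :
        HasDerivAt (fun t : ℝ => f (x + u + t • v)) ⟪gradient f (x + u + t • v), v⟫ t := by
      have := (hdiff _).hasGradientAt.hasFDerivAt.comp_hasDerivAt t hline
      rwa [InnerProductSpace.toDual_apply_apply] at this
    exact (hcomp.sub ((hasDerivAt_id' t).mul_const ⟪gradient f x, v⟫)).congr_deriv (by ring)
  have hφ' : ∀ t ∈ Icc (0 : ℝ) 1, ⟪gradient f (x + u + t • v), v⟫ - ⟪gradient f x, v⟫ ≤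
      ‖v‖ * √((1 - t) * quadForm (Q j) u + t * quadForm (Q j) w) := by
    intro t ht
    have hconvex := (convexOn_quadForm (hlip.quadForm_nonneg j)).2 (Set.mem_univ u)
      (Set.mem_univ w) (sub_nonneg.2 ht.2) ht.1 (sub_add_cancel 1 t)
    have hseg : x + u + t • v - x = (1 - t) • u + t • w := by rw [hw]; module
    rw [← inner_sub_left]
    refine (hlip.inner_sub_blockMask_le j _ _ h).trans ?_
    rw [hseg]
    gcongr
    simpa using hconvex
  have := sub_le_mul_sqrt_of_hasDerivAt_le (hlip.quadForm_nonneg j w) (hlip.quadForm_nonneg j u)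
    (norm_nonneg v) hφ hφ'
  simp only [φ, one_smul, zero_smul, add_zero, one_mul, zero_mul, sub_zero] at this
  rw [show x + w = x + u + v by rw [hw, add_assoc]]
  linarith

end BlockLip

theorem stmt0_general {d m : ℕ} (blk : Fin d → Fin m)
    (f : Euc d → ℝ) (hdiff : Differentiable ℝ f)
    (Q : Fin m → Matrix (Fin d) (Fin d) ℝ)
    (hlip : BlockLip blk f Q) :
    ∀ x y : Euc d,
      f y - f x ≤ ⟪gradient f x, y - x⟫ + bigL blk Q / 2 * ‖y - x‖ ^ 2 := by
  intro x y
  set h := y - x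
  set w : ℕ → Euc d := fun j => x + maskGE blk (j + 1) h
  set c : Fin m → ℝ := fun j =>
    (quadForm (Q j) (maskGE blk (j + 1) h) + quadForm (Q j) (maskGE blk (j + 2) h)) / 2
  have htelescope : f y - f x = ∑ j : Fin m, (f (w j) - f (w (j + 1))) := by
    rw [Fin.sum_univ_eq_sum_range (fun j => f (w j) - f (w (j + 1))), Finset.sum_range_sub']
    simp [w, h, maskGE_one, maskGE_of_le blk le_rfl]
  have hc : ∑ j, c j = quadForm (Qtilde blk Q) h / 2 := by
    simp only [c, quadForm_Qtilde, sum_div]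
  calc f y - f x ≤ ∑ j, (⟪gradient f x, blockMask blk j h⟫ + ‖blockMask blk j h‖ * √(c j)) :=
        htelescope ▸ sum_le_sum fun j _ => hlip.sub_le_inner_blockMask_add hdiff j x h
    _ ≤ ⟪gradient f x, h⟫ + ‖h‖ * √(∑ j, c j) := by
        rw [sum_add_distrib, sum_inner_blockMask]
        gcongr
        exact sum_norm_blockMask_mul_sqrt_le blk h fun j =>
          div_nonneg (add_nonneg (hlip.quadForm_nonneg j _) (hlip.quadForm_nonneg j _)) two_pos.le
    _ ≤ ⟪gradient f x, y - x⟫ + bigL blk Q / 2 * ‖y - x‖ ^ 2 := by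
        rw [hc]
        exact add_le_add le_rfl (norm_mul_sqrt_half_quadForm_le _ h)

theorem stmt0 {d m : ℕ} (blk : Fin d → Fin m) (hmono : Monotone blk)
    (hsurj : Function.Surjective blk)
    (f : Euc d → ℝ) (hconv : ConvexOn ℝ Set.univ f) (hdiff : Differentiable ℝ f)
    (Q : Fin m → Matrix (Fin d) (Fin d) ℝ) (hpsd : ∀ j, (Q j).PosSemidef)
    (hlip : BlockLip blk f Q) :
    ∀ x y : Euc d,
      f y - f x ≤ ⟪gradient f x, y - x⟫ + bigL blk Q / 2 * ‖y - x‖ ^ 2 :=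
  stmt0_general blk f hdiff Q hlip
end
end

section
/- With the estimate-sequence construction below, for every u ∈ ℝ^d, every sequence of vectors {q_i}_{i≥1} ⊆ ℝ^d, and every k ≥ 1: A_k (f̄(y_k) − f̄(u)) ≤ Σ_{i=1}^k E_i(u) + ½‖u − x_0‖² − ((1 + A_k γ)/2)‖u − v_k‖², where E_i(u) := A_i (f(y_i) − f(x_i)) − A_{i−1}(f(y_{i−1}) − f(x_i)) − a_i ⟨q_i, v_i − x_i⟩ + a_i ⟨∇f(x_i) − q_i, x_i − u⟩ − ((1 + A_{i−1}γ)/2)‖v_i − v_{i−1}‖². -/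
noncomputable section
open MeasureTheory Finset Set RealInnerProductSpace

/-!
The estimate function ψ_k is ½‖· - x₀‖² plus affine terms plus A_k g, and v_k minimises it.
The optimality condition makes (x₀ - ∑ aᵢ qᵢ - v_k) / A_k a subgradient of g at v_k, so the
strong convexity of g yields the growth bound
ψ_k(u) ≥ ψ_k(v_k) + (1 + A_k γ)/2 ‖u - v_k‖².
Applied to ψ_{i-1} at u = v_i and summed, it telescopes into a lower bound on ψ_k(v_k). Together
with Jensen's inequality for g at the weighted average y_k, the gradient inequality
f(xᵢ) + ⟪∇f(xᵢ), u - xᵢ⟫ ≤ f(u), and the growth bound of ψ_k at u, this gives the estimate,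
the f(yᵢ) terms of the sum telescoping to A_k f(y_k).
-/

open Filter Topology

theorem ConvexOn.add_inner_gradient_le {E : Type*} [NormedAddCommGroup E] [InnerProductSpace ℝ E]
    [CompleteSpace E] {f : E → ℝ} (hf : ConvexOn ℝ Set.univ f) {x : E}
    (hfx : DifferentiableAt ℝ f x) (z : E) :
    f x + ⟪gradient f x, z - x⟫ ≤ f z := by
  let ℓ : ℝ →ᵃ[ℝ] E := AffineMap.lineMap x z
  have hline : ConvexOn ℝ Set.univ (f ∘ ℓ) := hf.comp_affineMap ℓ
  have hderiv : HasDerivAt (f ∘ ℓ) (fderiv ℝ f x (z - x)) 0 :=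
    hfx.hasFDerivAt.comp_hasDerivAt_of_eq (0 : ℝ) AffineMap.hasDerivAt_lineMap (by simp [ℓ])
  have hslope := hline.le_slope_of_hasDerivAt (mem_univ 0) (mem_univ 1) one_pos hderiv
  simp only [slope_def_field, Function.comp_apply, ℓ, AffineMap.lineMap_apply_zero,
    AffineMap.lineMap_apply_one, sub_zero, div_one] at hslope
  rw [inner_gradient_left]
  linarith

theorem ConvexOn.inner_le_of_isMinOn_sq_add {E : Type*} [NormedAddCommGroup E]
    [InnerProductSpace ℝ E] {g : E → ℝ} (hg : ConvexOn ℝ Set.univ g) {τ : ℝ} (hτ : 0 < τ)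
    {c p v : E} (hv : IsMinOn (fun u => ‖u - c‖ ^ 2 / 2 + ⟪p, u⟫ + τ * g u) Set.univ v) (z : E) :
    g v + ⟪τ⁻¹ • (c - p - v), z - v⟫ ≤ g z := by
  set D := ⟪v - c + p, z - v⟫ + τ * (g z - g v)
  -- compare the objective at v and at v + t • (z - v), then let t → 0⁺
  have hdir : ∀ t ∈ Ioo (0 : ℝ) 1, 0 ≤ D + t * (‖z - v‖ ^ 2 / 2) := by
    rintro t ⟨ht0, ht1⟩
    have hmin := isMinOn_iff.mp hv (v + t • (z - v)) (mem_univ _)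
    have hconv : g (v + t • (z - v)) ≤ (1 - t) * g v + t * g z := by
      have h := hg.2 (mem_univ v) (mem_univ z) (by linarith : 0 ≤ 1 - t) ht0.le (by ring)
      rwa [show (1 - t) • v + t • z = v + t • (z - v) by module] at h
    have hsq : ‖v + t • (z - v) - c‖ ^ 2 =
        ‖v - c‖ ^ 2 + 2 * (t * ⟪v - c, z - v⟫) + t ^ 2 * ‖z - v‖ ^ 2 := by
      rw [show v + t • (z - v) - c = (v - c) + t • (z - v) by abel, norm_add_sq_real,
        real_inner_smul_right, norm_smul, Real.norm_eq_abs, abs_of_pos ht0, mul_pow]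
    have hp : ⟪p, v + t • (z - v)⟫ = ⟪p, v⟫ + t * ⟪p, z - v⟫ := by
      rw [inner_add_right, real_inner_smul_right]
    have hD : D = ⟪v - c, z - v⟫ + ⟪p, z - v⟫ + τ * (g z - g v) := by
      simp only [D, inner_add_left]
    simp only [hsq, hp] at hmin
    have hgap : 0 ≤ t * (D + t * (‖z - v‖ ^ 2 / 2)) := by
      rw [hD]
      linarith [mul_le_mul_of_nonneg_left hconv hτ.le]
    exact nonneg_of_mul_nonneg_right hgap ht0
  have hlim : 0 ≤ D := by
    have htend : Tendsto (fun t : ℝ => D + t * (‖z - v‖ ^ 2 / 2)) (𝓝[>] 0) (𝓝 D) := by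
      have : Continuous (fun t : ℝ => D + t * (‖z - v‖ ^ 2 / 2)) := by fun_prop
      simpa using (this.tendsto 0).mono_left nhdsWithin_le_nhds
    exact ge_of_tendsto htend (eventually_of_mem (Ioo_mem_nhdsGT one_pos) hdir)
  have hstep : τ⁻¹ * -⟪v - c + p, z - v⟫ ≤ g z - g v := by
    rw [inv_mul_le_iff₀ hτ]
    linarith
  rwa [real_inner_smul_left, show c - p - v = -(v - c + p) by abel, inner_neg_left,
    ← le_sub_iff_add_le']

theorem SubgradStrongConvex.add_sq_le_of_isMinOn {d : ℕ} {γ τ : ℝ} {g : Euc d → ℝ}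
    (hsc : SubgradStrongConvex γ g) (hg : ConvexOn ℝ Set.univ g) (hτ : 0 < τ) {c p v : Euc d}
    (hv : IsMinOn (fun u => ‖u - c‖ ^ 2 / 2 + ⟪p, u⟫ + τ * g u) Set.univ v) (u : Euc d) :
    ‖v - c‖ ^ 2 / 2 + ⟪p, v⟫ + τ * g v + (1 + τ * γ) / 2 * ‖u - v‖ ^ 2 ≤
      ‖u - c‖ ^ 2 / 2 + ⟪p, u⟫ + τ * g u := by
  have hstrong := hsc v u _ (hg.inner_le_of_isMinOn_sq_add hτ hv)
  rw [real_inner_smul_left] at hstrong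
  have hscaled := mul_le_mul_of_nonneg_left hstrong hτ.le
  rw [mul_add, mul_add, ← mul_assoc τ τ⁻¹, mul_inv_cancel₀ hτ.ne', one_mul] at hscaled
  have hsq : ‖u - c‖ ^ 2 = ‖v - c‖ ^ 2 + 2 * ⟪v - c, u - v⟫ + ‖u - v‖ ^ 2 := by
    rw [show u - c = (v - c) + (u - v) by abel, norm_add_sq_real]
  have hinner : ⟪c - p - v, u - v⟫ = -⟪v - c, u - v⟫ - (⟪p, u⟫ - ⟪p, v⟫) := by
    rw [← inner_sub_right, show c - p - v = -(v - c) - p by abel, inner_sub_left, inner_neg_left]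
  rw [hinner] at hscaled
  rw [hsq]
  linarith

theorem sum_Icc_sub_pred (F : ℕ → ℝ) (k : ℕ) :
    ∑ i ∈ Finset.Icc 1 k, (F i - F (i - 1)) = F k - F 0 := by
  induction k with
  | zero => simp
  | succ k ih => rw [Finset.sum_Icc_succ_top (by omega), ih, Nat.add_sub_cancel]; ring

section EstimateSequence

variable {E : Type*} [NormedAddCommGroup E] [InnerProductSpace ℝ E]
  {f g : E → ℝ} {a A : ℕ → ℝ} {x q v y : ℕ → E} {γ : ℝ}

theorem eq_sum_Icc_of_eq_add (hA0 : A 0 = 0) (hA : ∀ k, 1 ≤ k → A k = A (k - 1) + a k)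
    (k : ℕ) : A k = ∑ i ∈ Finset.Icc 1 k, a i := by
  rw [Finset.sum_congr rfl fun i hi => eq_sub_of_add_eq' (hA i (Finset.mem_Icc.mp hi).1).symm,
    sum_Icc_sub_pred, hA0, sub_zero]

theorem sum_Icc_pos (hapos : ∀ k, 1 ≤ k → 0 < a k) {k : ℕ} (hk : 1 ≤ k) :
    0 < ∑ i ∈ Finset.Icc 1 k, a i :=
  Finset.sum_pos (fun i hi => hapos i (Finset.mem_Icc.mp hi).1)
    ⟨1, Finset.mem_Icc.mpr ⟨le_rfl, hk⟩⟩

-- the estimate function ψ_k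
variable (f g a x q) in
def estimateFun (k : ℕ) (u : E) : ℝ :=
  ‖u - x 0‖ ^ 2 / 2 + ∑ i ∈ Finset.Icc 1 k, a i * (f (x i) + ⟪q i, u - x i⟫ + g u)

theorem estimateFun_succ (k : ℕ) (u : E) :
    estimateFun f g a x q (k + 1) u =
      estimateFun f g a x q k u
        + a (k + 1) * (f (x (k + 1)) + ⟪q (k + 1), u - x (k + 1)⟫ + g u) := by
  rw [estimateFun, estimateFun, Finset.sum_Icc_succ_top (by omega)]
  ring

theorem estimateFun_eq (k : ℕ) (u : E) :
    estimateFun f g a x q k u =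
      ‖u - x 0‖ ^ 2 / 2 + ⟪∑ i ∈ Finset.Icc 1 k, a i • q i, u⟫
        + (∑ i ∈ Finset.Icc 1 k, a i) * g u
        + ∑ i ∈ Finset.Icc 1 k, a i * (f (x i) - ⟪q i, x i⟫) := by
  have hterm : ∀ i, a i * (f (x i) + ⟪q i, u - x i⟫ + g u) =
      ⟪a i • q i, u⟫ + a i * g u + a i * (f (x i) - ⟪q i, x i⟫) := fun i => by
    rw [real_inner_smul_left, inner_sub_right]; ring
  simp only [estimateFun, hterm, Finset.sum_add_distrib, sum_inner, Finset.sum_mul]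
  ring

theorem sum_le_estimateFun_of_growth (hv0 : v 0 = x 0)
    (hgrowth : ∀ k u, estimateFun f g a x q k (v k) + (1 + A k * γ) / 2 * ‖u - v k‖ ^ 2 ≤
      estimateFun f g a x q k u) (k : ℕ) :
    ∑ i ∈ Finset.Icc 1 k, ((1 + A (i - 1) * γ) / 2 * ‖v i - v (i - 1)‖ ^ 2
        + a i * (f (x i) + ⟪q i, v i - x i⟫ + g (v i))) ≤
      estimateFun f g a x q k (v k) := by
  induction k with
  | zero => simp [estimateFun, hv0]
  | succ k ih =>
    rw [Finset.sum_Icc_succ_top (by omega), estimateFun_succ, Nat.add_sub_cancel]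
    linarith [hgrowth k (v (k + 1))]

theorem ConvexOn.mul_map_le_sum_of_eq_smul_sum (hg : ConvexOn ℝ Set.univ g)
    (hapos : ∀ k, 1 ≤ k → 0 < a k) {k : ℕ} (hk : 1 ≤ k)
    (hy : y k = (∑ i ∈ Finset.Icc 1 k, a i)⁻¹ • ∑ i ∈ Finset.Icc 1 k, a i • v i) :
    (∑ i ∈ Finset.Icc 1 k, a i) * g (y k) ≤ ∑ i ∈ Finset.Icc 1 k, a i * g (v i) := by
  have hsum := sum_Icc_pos hapos hk
  have hjensen := hg.map_centerMass_le (t := Finset.Icc 1 k) (w := a) (p := v)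
    (fun i hi => (hapos i (Finset.mem_Icc.mp hi).1).le) hsum (fun _ _ => mem_univ _)
  rw [Finset.centerMass, ← hy, Finset.centerMass, smul_eq_mul] at hjensen
  simpa only [smul_eq_mul, Function.comp_apply, mul_inv_cancel_left₀ hsum.ne'] using
    mul_le_mul_of_nonneg_left hjensen hsum.le

theorem estimateFun_le_add_inner_gradient [CompleteSpace E] (hf : ConvexOn ℝ Set.univ f)
    (hfd : Differentiable ℝ f) (hapos : ∀ k, 1 ≤ k → 0 < a k) (k : ℕ) (u : E) :
    estimateFun f g a x q k u ≤ ‖u - x 0‖ ^ 2 / 2 + (∑ i ∈ Finset.Icc 1 k, a i) * (f u + g u)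
      + ∑ i ∈ Finset.Icc 1 k, a i * ⟪gradient f (x i) - q i, x i - u⟫ := by
  rw [estimateFun, add_assoc, Finset.sum_mul, ← Finset.sum_add_distrib]
  gcongr with i hi
  have hgrad := hf.add_inner_gradient_le (hfd (x i)) u
  have hinner : ⟪gradient f (x i) - q i, x i - u⟫ =
      ⟪q i, u - x i⟫ - ⟪gradient f (x i), u - x i⟫ := by
    rw [← inner_sub_left, ← neg_sub u, inner_neg_right, ← inner_neg_left, neg_sub]
  rw [hinner, ← mul_add]
  exact mul_le_mul_of_nonneg_left (by linarith) (hapos i (Finset.mem_Icc.mp hi).1).le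

end EstimateSequence

theorem estimateFun_growth {d : ℕ} {f g : Euc d → ℝ} {γ : ℝ} {a A : ℕ → ℝ} {x q v : ℕ → Euc d}
    (hsc : SubgradStrongConvex γ g) (hg : ConvexOn ℝ Set.univ g) (hA0 : A 0 = 0)
    (hA : ∀ k, 1 ≤ k → A k = A (k - 1) + a k) (hapos : ∀ k, 1 ≤ k → 0 < a k)
    (hv0 : v 0 = x 0) (hv : ∀ k, 1 ≤ k → IsMinOn (estimateFun f g a x q k) Set.univ (v k))
    (k : ℕ) (u : Euc d) :
    estimateFun f g a x q k (v k) + (1 + A k * γ) / 2 * ‖u - v k‖ ^ 2 ≤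
      estimateFun f g a x q k u := by
  rcases Nat.eq_zero_or_pos k with rfl | hk
  · simp [estimateFun, hA0, hv0, div_eq_inv_mul]
  have hmin : IsMinOn (fun w => ‖w - x 0‖ ^ 2 / 2 + ⟪∑ i ∈ Finset.Icc 1 k, a i • q i, w⟫
      + (∑ i ∈ Finset.Icc 1 k, a i) * g w) Set.univ (v k) := by
    refine isMinOn_iff.mpr fun w _ => ?_
    have hvw := isMinOn_iff.mp (hv k hk) w (mem_univ w)
    rw [estimateFun_eq, estimateFun_eq] at hvw
    linarith
  rw [estimateFun_eq, estimateFun_eq, eq_sum_Icc_of_eq_add hA0 hA k]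
  linarith [hsc.add_sq_le_of_isMinOn hg (sum_Icc_pos hapos hk) hmin u]

theorem stmt5_general {d : ℕ} (f g : Euc d → ℝ) (γ : ℝ)
    (hfconv : ConvexOn ℝ Set.univ f) (hfdiff : Differentiable ℝ f)
    (hgconv : ConvexOn ℝ Set.univ g) (hgsc : SubgradStrongConvex γ g)
    (a A : ℕ → ℝ) (hA0 : A 0 = 0)
    (hapos : ∀ k, 1 ≤ k → 0 < a k)
    (hA : ∀ k, 1 ≤ k → A k = A (k - 1) + a k)
    (x q v y : ℕ → Euc d)
    (hv0 : v 0 = x 0)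
    (hv : ∀ k, 1 ≤ k → IsMinOn
      (fun u => ‖u - x 0‖ ^ 2 / 2 +
        ∑ i ∈ Finset.Icc 1 k, a i * (f (x i) + ⟪q i, u - x i⟫ + g u))
      Set.univ (v k))
    (hy : ∀ k, 1 ≤ k → y k = (A k)⁻¹ • ∑ i ∈ Finset.Icc 1 k, a i • v i) :
    ∀ u : Euc d, ∀ k, 1 ≤ k →
      A k * ((f (y k) + g (y k)) - (f u + g u)) ≤
        (∑ i ∈ Finset.Icc 1 k,
          (A i * (f (y i) - f (x i)) - A (i - 1) * (f (y (i - 1)) - f (x i))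
            - a i * ⟪q i, v i - x i⟫
            + a i * ⟪gradient f (x i) - q i, x i - u⟫
            - (1 + A (i - 1) * γ) / 2 * ‖v i - v (i - 1)‖ ^ 2))
        + ‖u - x 0‖ ^ 2 / 2 - (1 + A k * γ) / 2 * ‖u - v k‖ ^ 2 := by
  intro u k hk
  have hAk := eq_sum_Icc_of_eq_add hA0 hA k
  have hgrowth := estimateFun_growth hgsc hgconv hA0 hA hapos hv0 hv
  have hdescent := sum_le_estimateFun_of_growth hv0 hgrowth k
  have hjensen := hgconv.mul_map_le_sum_of_eq_smul_sum hapos hk (hAk ▸ hy k hk)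
  have hupper :=
    estimateFun_le_add_inner_gradient (g := g) (x := x) (q := q) hfconv hfdiff hapos k u
  have htelescope := sum_Icc_sub_pred (fun i => A i * f (y i)) k
  -- split each summand as (A i f(y i) - A (i-1) f(y (i-1))) - [term of hdescent]
  -- + [term of hjensen] + [term of hupper]
  rw [Finset.sum_congr rfl (g := fun i => (A i * f (y i) - A (i - 1) * f (y (i - 1)))
      - ((1 + A (i - 1) * γ) / 2 * ‖v i - v (i - 1)‖ ^ 2
        + a i * (f (x i) + ⟪q i, v i - x i⟫ + g (v i)))
      + a i * g (v i) + a i * ⟪gradient f (x i) - q i, x i - u⟫)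
    fun i hi => by rw [hA i (Finset.mem_Icc.mp hi).1]; ring]
  rw [Finset.sum_add_distrib, Finset.sum_add_distrib, Finset.sum_sub_distrib, htelescope, hA0]
  rw [← hAk] at hjensen hupper
  linarith [hgrowth k u]

theorem stmt5 {d : ℕ} (f g : Euc d → ℝ) (γ : ℝ) (hγ : 0 ≤ γ)
    (hfconv : ConvexOn ℝ Set.univ f) (hfdiff : Differentiable ℝ f)
    (hgconv : ConvexOn ℝ Set.univ g) (hgsc : SubgradStrongConvex γ g)
    (a A : ℕ → ℝ) (ha0 : a 0 = 0) (hA0 : A 0 = 0)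
    (hapos : ∀ k, 1 ≤ k → 0 < a k)
    (hA : ∀ k, 1 ≤ k → A k = A (k - 1) + a k)
    (x q v y : ℕ → Euc d)
    (hv0 : v 0 = x 0) (hy0 : y 0 = x 0)
    (hv : ∀ k, 1 ≤ k → IsMinOn
      (fun u => ‖u - x 0‖ ^ 2 / 2 +
        ∑ i ∈ Finset.Icc 1 k, a i * (f (x i) + ⟪q i, u - x i⟫ + g u))
      Set.univ (v k))
    (hy : ∀ k, 1 ≤ k → y k = (A k)⁻¹ • ∑ i ∈ Finset.Icc 1 k, a i • v i) :
    ∀ u : Euc d, ∀ k, 1 ≤ k →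
      A k * ((f (y k) + g (y k)) - (f u + g u)) ≤
        (∑ i ∈ Finset.Icc 1 k,
          (A i * (f (y i) - f (x i)) - A (i - 1) * (f (y (i - 1)) - f (x i))
            - a i * ⟪q i, v i - x i⟫
            + a i * ⟪gradient f (x i) - q i, x i - u⟫
            - (1 + A (i - 1) * γ) / 2 * ‖v i - v (i - 1)‖ ^ 2))
        + ‖u - x 0‖ ^ 2 / 2 - (1 + A k * γ) / 2 * ‖u - v k‖ ^ 2 :=
  stmt5_general f g γ hfconv hfdiff hgconv hgsc a A hA0 hapos hA x q v y hv0 hv hy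
end
end

section
/- Let L > 0 and γ ≥ 0. Define A_0 = 0 and, for k ≥ 1, A_k = A_{k−1} + a_k where a_k > 0 is determined by a_k² = (2(1 + A_{k−1}γ)/(5L)) · A_k (i.e., a_k is the largest positive value with a_k²/A_k ≤ 2(1 + A_{k−1}γ)/(5L)). Then for all k ≥ 1: A_k ≥ max{ (2/(5L))(1 + √(2γ/(5L)))^{k−1}, k²/(10L) }. -/
/-!
Write `c = 2 / (5L)`. The step equation `a_k² = c (1 + A_{k-1} γ) A_k` gives two lower bounds on
the increment: `a_k² ≥ c γ A_{k-1}²`, so `A_k ≥ (1 + √(c γ)) A_{k-1}`, and `a_k² ≥ c A_k`, so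
`A_k - A_{k-1} ≥ √c · √A_k`, which forces `√A_k ≥ √A_{k-1} + √c / 2` and hence `√A_k ≥ k √c / 2`.
-/

theorem one_add_sqrt_mul_le_add {c γ A a : ℝ} (hc : 0 ≤ c) (hγ : 0 ≤ γ) (hA : 0 ≤ A)
    (ha : 0 ≤ a) (h : a ^ 2 = c * (1 + A * γ) * (A + a)) :
    (1 + √(c * γ)) * A ≤ A + a := by
  have hcγ : 0 ≤ c * γ := mul_nonneg hc hγ
  have : √(c * γ) * A ≤ a := by
    rw [← sq_le_sq₀ (by positivity) ha, mul_pow, Real.sq_sqrt hcγ, h]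
    nlinarith [mul_nonneg hc (add_nonneg hA ha), mul_nonneg hcγ (mul_nonneg hA ha)]
  linarith

theorem sqrt_add_half_sqrt_le {c A a : ℝ} (hc : 0 ≤ c) (hA : 0 ≤ A) (ha : 0 < a)
    (h : c * (A + a) ≤ a ^ 2) : √A + √c / 2 ≤ √(A + a) := by
  have hx2 : √(A + a) ^ 2 = A + a := Real.sq_sqrt (by linarith)
  have hy2 : √A ^ 2 = A := Real.sq_sqrt hA
  have hx : 0 < √(A + a) := Real.sqrt_pos.2 (by linarith)
  have hs : 0 ≤ √c := Real.sqrt_nonneg c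
  have hsx : √c * √(A + a) ≤ a := by
    rwa [← sq_le_sq₀ (by positivity) ha.le, mul_pow, Real.sq_sqrt hc, hx2]
  have hsx' : √c ≤ √(A + a) := by nlinarith
  have : √A ^ 2 ≤ (√(A + a) - √c / 2) ^ 2 := by nlinarith [sq_nonneg √c]
  rw [sq_le_sq₀ (Real.sqrt_nonneg A) (by linarith)] at this
  linarith

theorem pow_mul_le_of_forall_mul_le {u : ℕ → ℝ} {q : ℝ} (hq : 0 ≤ q)
    (h : ∀ k, q * u k ≤ u (k + 1)) (m : ℕ) : ∀ n, q ^ n * u m ≤ u (m + n)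
  | 0 => by simp
  | n + 1 =>
    calc q ^ (n + 1) * u m = q * (q ^ n * u m) := by ring
      _ ≤ q * u (m + n) := mul_le_mul_of_nonneg_left (pow_mul_le_of_forall_mul_le hq h m n) hq
      _ ≤ u (m + (n + 1)) := h (m + n)

theorem add_natCast_mul_le_of_forall_add_le {u : ℕ → ℝ} {d : ℝ} (h : ∀ k, u k + d ≤ u (k + 1)) :
    ∀ n : ℕ, u 0 + n * d ≤ u n
  | 0 => by simp
  | n + 1 => by
    have := add_natCast_mul_le_of_forall_add_le h n
    linarith [h n, show ((n + 1 : ℕ) : ℝ) * d = n * d + d by push_cast; ring]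

/-- The step sizes of the paper, with `2 / (5L)` generalized to `c` and indices shifted so that no
natural-number subtraction occurs. -/
structure IsStepSizeSeq (c γ : ℝ) (a A : ℕ → ℝ) : Prop where
  zero : A 0 = 0
  pos : ∀ k, 0 < a (k + 1)
  succ : ∀ k, A (k + 1) = A k + a (k + 1)
  sq_eq : ∀ k, a (k + 1) ^ 2 = c * (1 + A k * γ) * A (k + 1)

namespace IsStepSizeSeq

variable {c γ : ℝ} {a A : ℕ → ℝ}

theorem nonneg (hs : IsStepSizeSeq c γ a A) (k : ℕ) : 0 ≤ A k := by
  induction k with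
  | zero => exact hs.zero.ge
  | succ k ih => linarith [hs.succ k, hs.pos k]

theorem apply_one (hs : IsStepSizeSeq c γ a A) : A 1 = c := by
  have h := hs.sq_eq 0
  simp only [hs.zero, zero_mul, add_zero, mul_one, hs.succ, zero_add, sq] at h
  rw [hs.succ, hs.zero, zero_add]
  exact mul_right_cancel₀ (hs.pos 0).ne' h

theorem mul_one_add_sqrt_pow_le (hs : IsStepSizeSeq c γ a A) (hc : 0 ≤ c) (hγ : 0 ≤ γ)
    (n : ℕ) : c * (1 + √(c * γ)) ^ n ≤ A (n + 1) := by
  have hgeom (k : ℕ) : (1 + √(c * γ)) * A k ≤ A (k + 1) := by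
    have h := hs.sq_eq k
    rw [hs.succ] at h ⊢
    exact one_add_sqrt_mul_le_add hc hγ (hs.nonneg k) (hs.pos k).le h
  have h := pow_mul_le_of_forall_mul_le (by positivity) hgeom 1 n
  rw [hs.apply_one, add_comm 1 n] at h
  exact (mul_comm _ _).trans_le h

theorem sq_mul_le (hs : IsStepSizeSeq c γ a A) (hc : 0 ≤ c) (hγ : 0 ≤ γ) (n : ℕ) :
    (n : ℝ) ^ 2 * (c / 4) ≤ A n := by
  have hsqrt (k : ℕ) : √(A k) + √c / 2 ≤ √(A (k + 1)) := by
    rw [hs.succ]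
    refine sqrt_add_half_sqrt_le hc (hs.nonneg k) (hs.pos k) ?_
    rw [hs.sq_eq k, ← hs.succ]
    nlinarith [mul_nonneg (mul_nonneg hc (hs.nonneg k)) hγ, hs.nonneg (k + 1)]
  have h := add_natCast_mul_le_of_forall_add_le hsqrt n
  rwa [hs.zero, Real.sqrt_zero, zero_add, Real.le_sqrt (by positivity) (hs.nonneg n), mul_pow,
    div_pow, Real.sq_sqrt hc, show (2 : ℝ) ^ 2 = 4 by norm_num] at h

end IsStepSizeSeq

theorem stmt9 (L γ : ℝ) (hL : 0 < L) (hγ : 0 ≤ γ) (a A : ℕ → ℝ)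
    (hA0 : A 0 = 0)
    (hapos : ∀ k, 1 ≤ k → 0 < a k)
    (hA : ∀ k, 1 ≤ k → A k = A (k - 1) + a k)
    (hstep : ∀ k, 1 ≤ k → a k ^ 2 = 2 * (1 + A (k - 1) * γ) / (5 * L) * A k) :
    ∀ k : ℕ, 1 ≤ k →
      max (2 / (5 * L) * (1 + Real.sqrt (2 * γ / (5 * L))) ^ (k - 1))
          ((k : ℝ) ^ 2 / (10 * L)) ≤ A k := by
  have hs : IsStepSizeSeq (2 / (5 * L)) γ a A :=
    { zero := hA0
      pos := fun k => hapos (k + 1) k.succ_pos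
      succ := fun k => hA (k + 1) k.succ_pos
      sq_eq := fun k => by rw [hstep (k + 1) k.succ_pos, Nat.add_sub_cancel]; ring }
  have hc : 0 ≤ 2 / (5 * L) := by positivity
  intro k hk
  obtain ⟨n, rfl⟩ := Nat.exists_eq_add_of_le' hk
  refine max_le ?_ ?_
  · rw [Nat.add_sub_cancel, show 2 * γ / (5 * L) = 2 / (5 * L) * γ by ring]
    exact hs.mul_one_add_sqrt_pow_le hc hγ n
  · calc ((n + 1 : ℕ) : ℝ) ^ 2 / (10 * L) = ((n + 1 : ℕ) : ℝ) ^ 2 * (2 / (5 * L) / 4) := by ring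
      _ ≤ A (n + 1) := hs.sq_mul_le hc hγ (n + 1)
end
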